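/- arXiv:1308.2034 — 3 statements merged into one kernel-verified Lean document; each statement's English description precedes it below -/
import Mathlib

section
/- Let S be a commutative ring, l a regular element of S, and R = S/(l). Suppose we have S-module maps g_2 : G_2 → G_1, g_1 : G_1 → G_0 and R-module maps forming a chain complex f_2 : F_2 → F_1, f_1 : F_1 → F_0 with exactness at F_1, together with surjections p_i : G_i → F_i whose kernels are exactly l·G_i (i.e. multiplication by l on G_i is injective with image equal to ker(p_i)), such that the evident diagram commutes (p_1 ∘ g_2 = f_2 ∘ p_2 and p_0 ∘ g_1 = f_1 ∘ p_1). Then multiplication by l is injective on coker(g_1) and coker(g_1)/l·coker(g_1) ≅ coker(f_1) if and only if g_1(g_2(G_2)) ⊆ l · g_1(G_1). -/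
/-- **Lifting Lemma, Lemma 3.2.**
Let `S` be a commutative ring, `l ∈ S` a nonzerodivisor, `R = S/(l)`.
Given `S`-linear maps `g_2 : G_2 → G_1`, `g_1 : G_1 → G_0`, a complex of
`R`-modules (`S`-modules killed by `l`) `f_2 : F_2 → F_1`, `f_1 : F_1 → F_0`
exact at `F_1`, and surjections `p_i : G_i → F_i` with `ker p_i = l·G_i` and
multiplication by `l` injective on each `G_i`, such that the diagram commutes,
then: `coker g_1` is a lifting of `coker f_1` via `l` (i.e. `l` is a
nonzerodivisor on `G_0/g_1(G_1)` and `p_0` induces an isomorphism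
`(G_0/g_1(G_1))/l ≅ F_0/f_1(F_1)`) if and only if
`g_1(g_2(G_2)) ⊆ l·g_1(G_1)`. -/
theorem lifting_lemma
    {S : Type*} [CommRing S] (l : S) (hl : ∀ s : S, l * s = 0 → s = 0)
    {G2 G1 G0 F2 F1 F0 : Type*}
    [AddCommGroup G2] [AddCommGroup G1] [AddCommGroup G0]
    [AddCommGroup F2] [AddCommGroup F1] [AddCommGroup F0]
    [Module S G2] [Module S G1] [Module S G0]
    [Module S F2] [Module S F1] [Module S F0]
    (hlF2 : ∀ x : F2, l • x = 0) (hlF1 : ∀ x : F1, l • x = 0)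
    (hlF0 : ∀ x : F0, l • x = 0)
    (g2 : G2 →ₗ[S] G1) (g1 : G1 →ₗ[S] G0)
    (f2 : F2 →ₗ[S] F1) (f1 : F1 →ₗ[S] F0)
    (hbot : LinearMap.range f2 = LinearMap.ker f1)
    (p2 : G2 →ₗ[S] F2) (p1 : G1 →ₗ[S] F1) (p0 : G0 →ₗ[S] F0)
    (hp2 : Function.Surjective p2) (hp1 : Function.Surjective p1)
    (hp0 : Function.Surjective p0)
    (hreg2 : ∀ x : G2, l • x = 0 → x = 0) (hreg1 : ∀ x : G1, l • x = 0 → x = 0)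
    (hreg0 : ∀ x : G0, l • x = 0 → x = 0)
    (hker2 : ∀ x : G2, p2 x = 0 ↔ ∃ y, x = l • y)
    (hker1 : ∀ x : G1, p1 x = 0 ↔ ∃ y, x = l • y)
    (hker0 : ∀ x : G0, p0 x = 0 ↔ ∃ y, x = l • y)
    (hc2 : f2 ∘ₗ p2 = p1 ∘ₗ g2) (hc1 : f1 ∘ₗ p1 = p0 ∘ₗ g1) :
    ((∀ x : G0, l • x ∈ LinearMap.range g1 → x ∈ LinearMap.range g1) ∧
      (∀ x : G0, p0 x ∈ LinearMap.range f1 →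
        ∃ u ∈ LinearMap.range g1, ∃ z : G0, x = u + l • z)) ↔
    (∀ x : G2, ∃ y : G1, g1 (g2 x) = l • g1 y) := by
  constructor
  · rintro ⟨hA, _⟩ x
    have h0 : p0 (g1 (g2 x)) = 0 := by
      have e1 : p0 (g1 (g2 x)) = f1 (p1 (g2 x)) := by
        rw [← LinearMap.comp_apply, ← hc1, LinearMap.comp_apply]
      have e2 : p1 (g2 x) = f2 (p2 x) := by
        rw [← LinearMap.comp_apply, ← hc2, LinearMap.comp_apply]
      have e3 : f2 (p2 x) ∈ LinearMap.ker f1 :=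
        hbot ▸ LinearMap.mem_range_self f2 (p2 x)
      rw [e1, e2]; exact e3
    obtain ⟨y0, hy0⟩ := (hker0 _).mp h0
    obtain ⟨y, hy⟩ := hA y0 ⟨g2 x, hy0⟩
    exact ⟨y, by rw [hy0, hy]⟩
  · intro hC
    constructor
    · rintro x ⟨u, hu⟩
      have h1 : f1 (p1 u) = 0 := by
        have e1 : f1 (p1 u) = p0 (g1 u) := by
          rw [← LinearMap.comp_apply, hc1, LinearMap.comp_apply]
        rw [e1, hu, map_smul]; exact hlF0 _
      obtain ⟨t, ht⟩ : p1 u ∈ LinearMap.range f2 := by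
        rw [hbot]; exact h1
      obtain ⟨s, hs⟩ := hp2 t
      have h2 : p1 (u - g2 s) = 0 := by
        have e2 : p1 (g2 s) = f2 (p2 s) := by
          rw [← LinearMap.comp_apply, ← hc2, LinearMap.comp_apply]
        rw [map_sub, e2, hs, ht, sub_self]
      obtain ⟨v, hv⟩ := (hker1 _).mp h2
      obtain ⟨y, hy⟩ := hC s
      have key : l • x = l • g1 (y + v) := by
        have hu' : u = g2 s + l • v := by rw [← hv]; abel
        rw [← hu, hu', map_add, map_add, map_smul, hy, ← smul_add]
      have hz : x - g1 (y + v) = 0 :=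
        hreg0 _ (by rw [smul_sub, key, sub_self])
      exact ⟨y + v, (sub_eq_zero.mp hz).symm⟩
    · rintro x ⟨w, hw⟩
      obtain ⟨v, hv⟩ := hp1 w
      have h3 : p0 (x - g1 v) = 0 := by
        have e3 : p0 (g1 v) = f1 (p1 v) := by
          rw [← LinearMap.comp_apply, ← hc1, LinearMap.comp_apply]
        rw [map_sub, e3, hv, hw, sub_self]
      obtain ⟨z, hz⟩ := (hker0 _).mp h3
      exact ⟨g1 v, LinearMap.mem_range_self _ _, z, by rw [← hz]; abel⟩
end

section
/- With notation as in the lifting lemma, if additionally g_1 ∘ g_2 = 0 (i.e. the top rows form a complex), then coker(g_1) is a lifting via l of coker(f_1); that is, l is a nonzerodivisor on G_0/g_1(G_1) and (G_0/g_1(G_1))/l·(G_0/g_1(G_1)) ≅ F_0/f_1(F_1). -/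
/-- **Buchsbaum–Eisenbud lifting, the complex case.**
With the same setup as in the lifting lemma (`S` commutative, `l` a
nonzerodivisor, `R = S/(l)`, commutative diagram with exact columns
`0 → G_i →(·l) G_i →(p_i) F_i → 0` and the bottom row `F_2 → F_1 → F_0`
exact at `F_1`), if moreover `g_1 ∘ g_2 = 0` (the top rows form a complex),
then `coker g_1` is a lifting of `coker f_1` via `l`: `l` is a nonzerodivisor
on `G_0/g_1(G_1)` and `p_0` induces an isomorphism
`(G_0/g_1(G_1))/l·(G_0/g_1(G_1)) ≅ F_0/f_1(F_1)`. -/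
theorem lifting_lemma_of_complex
    {S : Type*} [CommRing S] (l : S) (hl : ∀ s : S, l * s = 0 → s = 0)
    {G2 G1 G0 F2 F1 F0 : Type*}
    [AddCommGroup G2] [AddCommGroup G1] [AddCommGroup G0]
    [AddCommGroup F2] [AddCommGroup F1] [AddCommGroup F0]
    [Module S G2] [Module S G1] [Module S G0]
    [Module S F2] [Module S F1] [Module S F0]
    (hlF2 : ∀ x : F2, l • x = 0) (hlF1 : ∀ x : F1, l • x = 0)
    (hlF0 : ∀ x : F0, l • x = 0)
    (g2 : G2 →ₗ[S] G1) (g1 : G1 →ₗ[S] G0)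
    (f2 : F2 →ₗ[S] F1) (f1 : F1 →ₗ[S] F0)
    (hbot : LinearMap.range f2 = LinearMap.ker f1)
    (p2 : G2 →ₗ[S] F2) (p1 : G1 →ₗ[S] F1) (p0 : G0 →ₗ[S] F0)
    (hp2 : Function.Surjective p2) (hp1 : Function.Surjective p1)
    (hp0 : Function.Surjective p0)
    (hreg2 : ∀ x : G2, l • x = 0 → x = 0) (hreg1 : ∀ x : G1, l • x = 0 → x = 0)
    (hreg0 : ∀ x : G0, l • x = 0 → x = 0)
    (hker2 : ∀ x : G2, p2 x = 0 ↔ ∃ y, x = l • y)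
    (hker1 : ∀ x : G1, p1 x = 0 ↔ ∃ y, x = l • y)
    (hker0 : ∀ x : G0, p0 x = 0 ↔ ∃ y, x = l • y)
    (hc2 : f2 ∘ₗ p2 = p1 ∘ₗ g2) (hc1 : f1 ∘ₗ p1 = p0 ∘ₗ g1)
    (hcx : g1 ∘ₗ g2 = 0) :
    (∀ x : G0, l • x ∈ LinearMap.range g1 → x ∈ LinearMap.range g1) ∧
    (∀ x : G0, p0 x ∈ LinearMap.range f1 →
      ∃ u ∈ LinearMap.range g1, ∃ z : G0, x = u + l • z) := by
  constructor
  · rintro x ⟨y, hy⟩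
    -- p1 y ∈ ker f1
    have h1 : f1 (p1 y) = 0 := by
      have h2 : p0 (g1 y) = 0 := by
        rw [hy, map_smul, hlF0]
      have := LinearMap.congr_fun hc1 y
      simpa [h2] using this
    have h2 : p1 y ∈ LinearMap.range f2 := by rw [hbot]; exact h1
    obtain ⟨w, hw⟩ := h2
    obtain ⟨z, hz⟩ := hp2 w
    have h3 : p1 (y - g2 z) = 0 := by
      have := LinearMap.congr_fun hc2 z
      simp only [LinearMap.comp_apply] at this
      rw [map_sub, ← this, hz, hw, sub_self]
    obtain ⟨y', hy'⟩ := (hker1 _).mp h3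
    have h4 : l • x = l • g1 y' := by
      have hgz : g1 (g2 z) = 0 := by
        have := LinearMap.congr_fun hcx z
        simpa using this
      have : g1 y = g1 (g2 z) + l • g1 y' := by
        rw [← map_smul, ← map_add, ← hy']
        congr 1
        abel
      rw [← hy, this, hgz, zero_add]
    have := hreg0 (x - g1 y') (by rw [smul_sub, h4, sub_self])
    exact ⟨y', (sub_eq_zero.mp this).symm⟩
  · rintro x ⟨v, hv⟩
    obtain ⟨y, hy⟩ := hp1 v
    have h1 : p0 (x - g1 y) = 0 := by
      have := LinearMap.congr_fun hc1 y
      simp only [LinearMap.comp_apply] at this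
      rw [map_sub, ← this, hy, hv, sub_self]
    obtain ⟨z, hz⟩ := (hker0 _).mp h1
    exact ⟨g1 y, ⟨y, rfl⟩, z, by rw [← hz]; abel⟩
end

section
/- Let M = ⟨f_1,…,f_r⟩ ⊆ F be a submodule and let M~ ⊆ F~ be the homogenization of M with respect to the weight (ω,ε), over Ã = A[t]. Then M~ equals the saturation ⟨f̃_1,…,f̃_r⟩ : t^∞. -/
/-!  Basic setup: the polynomial ring `A = K[X_1,…,X_n]`, a graded free module
`F = ⊕_{j} A(-d_j)` realized as `Fin k → A`, weight orders `(ω, ε)`, initial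
modules, Hilbert functions, graded free resolutions, Betti numbers,
regularity and componentwise notions, following Caviglia–Varbaro,
"Componentwise regularity (I)". -/

namespace CregPaper

abbrev A (K : Type*) [Field K] (n : ℕ) := MvPolynomial (Fin n) K

variable {K : Type*} [Field K] {n k : ℕ}

/-- `(ω)`-weight of an exponent vector `u`. -/
def wdeg (ω : Fin n → ℕ) (u : Fin n →₀ ℕ) : ℕ := u.sum fun i e => ω i * e

/-- total (standard) degree of an exponent vector `u`. -/
def tdeg (u : Fin n →₀ ℕ) : ℕ := u.sum fun _ e => e

/-- largest `(ω,ε)`-weight of a monomial in the support of `f ∈ F`. -/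
noncomputable def maxWt (ω : Fin n → ℕ) (ε : Fin k → ℕ) (f : Fin k → A K n) : ℕ :=
  Finset.univ.sup fun j => (f j).support.sup fun u => wdeg ω u + ε j

/-- the initial part `in_{(ω,ε)}(f)`: the sum of the terms of `f` of largest weight. -/
noncomputable def inForm (ω : Fin n → ℕ) (ε : Fin k → ℕ) (f : Fin k → A K n) :
    Fin k → A K n :=
  fun j => ∑ u ∈ (f j).support.filter fun u => wdeg ω u + ε j = maxWt ω ε f,
    MvPolynomial.monomial u ((f j).coeff u)

/-- the initial module `in_{(ω,ε)}(M)`. -/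
noncomputable def inMod (ω : Fin n → ℕ) (ε : Fin k → ℕ)
    (M : Submodule (A K n) (Fin k → A K n)) : Submodule (A K n) (Fin k → A K n) :=
  Submodule.span (A K n) {g | ∃ f ∈ M, f ≠ 0 ∧ g = inForm ω ε f}

/-- `f ∈ F = ⊕_j A(-d_j)` is homogeneous of (standard) degree `a`. -/
def IsHomog (d : Fin k → ℕ) (a : ℕ) (f : Fin k → A K n) : Prop :=
  ∀ j, ∀ u ∈ (f j).support, tdeg u + d j = a

/-- the `K`-subspace of `F` of homogeneous elements of degree `a`. -/
noncomputable def homogSub (d : Fin k → ℕ) (a : ℕ) : Submodule K (Fin k → A K n) where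
  carrier := {f | IsHomog d a f}
  add_mem' := by
    intro f g hf hg j u hu
    rcases Finset.mem_union.mp (MvPolynomial.support_add hu) with h | h
    · exact hf j u h
    · exact hg j u h
  zero_mem' := by intro j u hu; simp at hu
  smul_mem' := by
    intro c f hf j u hu
    exact hf j u (MvPolynomial.support_smul hu)

/-- the degree-`a` homogeneous component of `f ∈ F`. -/
noncomputable def homogComp (d : Fin k → ℕ) (f : Fin k → A K n) (a : ℕ) : Fin k → A K n :=
  fun j => ∑ u ∈ (f j).support.filter fun u => tdeg u + d j = a,
    MvPolynomial.monomial u ((f j).coeff u)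

/-- `M ⊆ F` is a graded submodule. -/
def IsGradedSub (d : Fin k → ℕ) (M : Submodule (A K n) (Fin k → A K n)) : Prop :=
  ∀ f ∈ M, ∀ a, homogComp d f a ∈ M

/-- Hilbert function of `M ⊆ F` in degree `a`. -/
noncomputable def hilb (d : Fin k → ℕ) (M : Submodule (A K n) (Fin k → A K n)) (a : ℕ) : ℕ :=
  Module.finrank K ↥(Submodule.restrictScalars K M ⊓ homogSub d a)

/-- the homogeneous maximal ideal `m = (X_1,…,X_n)` of `A`. -/
noncomputable def mIdeal (K : Type*) [Field K] (n : ℕ) : Ideal (A K n) :=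
  RingHom.ker (MvPolynomial.constantCoeff : A K n →+* K)

/-- graded Betti number `β_{0,a}(M) = dim_K (M/mM)_a`, the number of minimal
generators of the graded module `M` in degree `a`. -/
noncomputable def beta0 (d : Fin k → ℕ) (M : Submodule (A K n) (Fin k → A K n)) (a : ℕ) : ℕ :=
  hilb d M a - hilb d (mIdeal K n • M) a

/-- A graded free resolution of a graded submodule `M` of `F = ⊕_j A(-d_j)`:
`⋯ → A^{rk 1} → A^{rk 0} → M → 0`, each free module coming with degree shifts
`sh i`, all maps graded of degree `0`. -/
structure GFRes (d : Fin k → ℕ) (M : Submodule (A K n) (Fin k → A K n)) where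
  rk : ℕ → ℕ
  sh : (i : ℕ) → Fin (rk i) → ℕ
  aug : (Fin (rk 0) → A K n) →ₗ[A K n] (Fin k → A K n)
  diff : (i : ℕ) → ((Fin (rk (i+1)) → A K n) →ₗ[A K n] (Fin (rk i) → A K n))
  aug_range : LinearMap.range aug = M
  aug_hom : ∀ l, IsHomog d (sh 0 l) (aug (Pi.single l 1))
  diff_hom : ∀ i l, IsHomog (sh i) (sh (i+1) l) (diff i (Pi.single l 1))
  ex0 : LinearMap.range (diff 0) = LinearMap.ker aug
  exs : ∀ i, LinearMap.range (diff (i+1)) = LinearMap.ker (diff i)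

/-- minimality of a graded free resolution: all entries of the differential
matrices lie in the maximal ideal. -/
def GFRes.Minimal {d : Fin k → ℕ} {M : Submodule (A K n) (Fin k → A K n)}
    (res : GFRes d M) : Prop :=
  ∀ i x l, res.diff i x l ∈ mIdeal K n

/-- the graded Betti number `β_{i,j}(M)` read off from a (minimal) resolution. -/
noncomputable def GFRes.betti {d : Fin k → ℕ} {M : Submodule (A K n) (Fin k → A K n)}
    (res : GFRes d M) (i j : ℕ) : ℕ :=
  (Finset.univ.filter fun l => res.sh i l = j).card

/-- `reg_A(M) ≤ r`: there is a minimal graded free resolution of `M` with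
all shifts in homological degree `i` bounded by `i + r`. -/
def RegLE (d : Fin k → ℕ) (M : Submodule (A K n) (Fin k → A K n)) (r : ℕ) : Prop :=
  ∃ res : GFRes d M, res.Minimal ∧ ∀ i l, res.sh i l ≤ i + r

/-- `M_{⟨a⟩}`: the submodule generated by the homogeneous elements of degree `a` of `M`. -/
noncomputable def compSub (d : Fin k → ℕ) (M : Submodule (A K n) (Fin k → A K n)) (a : ℕ) :
    Submodule (A K n) (Fin k → A K n) :=
  Submodule.span (A K n) {f | f ∈ M ∧ IsHomog d a f}

/-- `M` is `r`-componentwise regular: `reg (M_{⟨a⟩}) ≤ a + r` for all `a`. -/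
def CWRegLE (d : Fin k → ℕ) (M : Submodule (A K n) (Fin k → A K n)) (r : ℕ) : Prop :=
  ∀ a, RegLE d (compSub d M a) (a + r)

/-- `M` is componentwise linear: each `M_{⟨a⟩}` is zero or has regularity `a`. -/
def CompLinear (d : Fin k → ℕ) (M : Submodule (A K n) (Fin k → A K n)) : Prop :=
  ∀ a, compSub d M a = ⊥ ∨ RegLE d (compSub d M a) a

/-- `M` is generated in degrees `≤ a`. -/
def GenInDegLE (d : Fin k → ℕ) (M : Submodule (A K n) (Fin k → A K n)) (a : ℕ) : Prop :=
  M ≤ Submodule.span (A K n) {f | f ∈ M ∧ ∃ b ≤ a, IsHomog d b f}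

end CregPaper
/-!  The flat family: `Ã = A[t]` with `deg X_i = (1, w_i)`, `deg t = (0,1)`,
homogenization of elements and modules with respect to `(ω,ε)`, saturation
with respect to `t`, and specializations `t = α`. -/

namespace CregPaper

variable {K : Type*} [Field K] {n k : ℕ}

abbrev At (K : Type*) [Field K] (n : ℕ) := Polynomial (A K n)

/-- the `(ω,ε)`-homogenization `f̃ ∈ F̃` of `f ∈ F`. -/
noncomputable def homogenize (ω : Fin n → ℕ) (ε : Fin k → ℕ) (f : Fin k → A K n) :
    Fin k → At K n :=
  fun j => ∑ u ∈ (f j).support,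
    Polynomial.monomial (maxWt ω ε f - (wdeg ω u + ε j))
      (MvPolynomial.monomial u ((f j).coeff u))

/-- the homogenization `M̃ ⊆ F̃` of a submodule `M ⊆ F`. -/
noncomputable def Mtilde (ω : Fin n → ℕ) (ε : Fin k → ℕ)
    (M : Submodule (A K n) (Fin k → A K n)) : Submodule (At K n) (Fin k → At K n) :=
  Submodule.span (At K n) {g | ∃ f ∈ M, g = homogenize ω ε f}

/-- saturation `N : t^∞` of a submodule `N ⊆ F̃`. -/
noncomputable def tsat (N : Submodule (At K n) (Fin k → At K n)) :
    Submodule (At K n) (Fin k → At K n) where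
  carrier := {x | ∃ e : ℕ, ((Polynomial.X : At K n) ^ e) • x ∈ N}
  add_mem' := by
    rintro x y ⟨e, he⟩ ⟨e', he'⟩
    refine ⟨e + e', ?_⟩
    rw [smul_add]
    refine Submodule.add_mem _ ?_ ?_
    · rw [pow_add, mul_comm, mul_smul]; exact Submodule.smul_mem _ _ he
    · rw [pow_add, mul_smul]; exact Submodule.smul_mem _ _ he'
  zero_mem' := ⟨0, by simp⟩
  smul_mem' := by
    rintro c x ⟨e, he⟩
    exact ⟨e, by rw [smul_comm]; exact Submodule.smul_mem _ _ he⟩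

/-- image in `F` of a submodule `N ⊆ F̃` under the evaluation `t ↦ α`. -/
noncomputable def evalSub (α : K) (N : Submodule (At K n) (Fin k → At K n)) :
    Submodule (A K n) (Fin k → A K n) :=
  Submodule.span (A K n)
    ((fun g : Fin k → At K n => fun j => Polynomial.eval (algebraMap K (A K n) α) (g j)) '' N)

/-- the linear map `R^r → M` sending the standard basis to `v`. -/
noncomputable def combo {R : Type*} [CommRing R] {M : Type*} [AddCommGroup M] [Module R M]
    {r : ℕ} (v : Fin r → M) : (Fin r → R) →ₗ[R] M where
  toFun x := ∑ i, x i • v i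
  map_add' x y := by simp [add_smul, Finset.sum_add_distrib]
  map_smul' c x := by simp [mul_smul, Finset.smul_sum]

end CregPaper

namespace CregPaper

section Aux

variable {K : Type*} [Field K] {n k : ℕ} (ω : Fin n → ℕ) (ε : Fin k → ℕ)

lemma wdeg_add (u v : Fin n →₀ ℕ) : wdeg ω (u + v) = wdeg ω u + wdeg ω v := by
  classical
  unfold wdeg
  rw [Finsupp.sum_add_index]
  · intro i _; exact mul_zero _
  · intro i _ e e'; exact mul_add _ _ _

noncomputable def hT (D : ℕ) (f : Fin k → A K n) : Fin k → At K n :=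
  fun j => ∑ u ∈ (f j).support,
    Polynomial.monomial (D - (wdeg ω u + ε j)) (MvPolynomial.monomial u ((f j).coeff u))

lemma hT_coeff (D : ℕ) (f : Fin k → A K n) (j : Fin k) (m : ℕ) (u : Fin n →₀ ℕ) :
    MvPolynomial.coeff u ((hT ω ε D f j).coeff m)
      = if D - (wdeg ω u + ε j) = m then (f j).coeff u else 0 := by
  classical
  unfold hT
  rw [Polynomial.finset_sum_coeff]
  simp only [Polynomial.coeff_monomial]
  rw [MvPolynomial.coeff_sum]
  have : ∀ v ∈ (f j).support,
      MvPolynomial.coeff u (if D - (wdeg ω v + ε j) = m then MvPolynomial.monomial v ((f j).coeff v) else 0)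
        = if v = u then (if D - (wdeg ω u + ε j) = m then (f j).coeff u else 0) else 0 := by
    intro v _
    split_ifs with h1 h2 h3 <;>
      simp_all [MvPolynomial.coeff_monomial]
  rw [Finset.sum_congr rfl this, Finset.sum_ite_eq' (f j).support u]
  by_cases hu : u ∈ (f j).support
  · rw [if_pos hu]
  · rw [if_neg hu, MvPolynomial.notMem_support_iff.mp hu]
    simp

noncomputable def pT (d : ℕ) (p : A K n) : At K n :=
  ∑ v ∈ p.support, Polynomial.monomial (d - wdeg ω v) (MvPolynomial.monomial v (p.coeff v))

lemma pT_coeff (d : ℕ) (p : A K n) (m : ℕ) (v : Fin n →₀ ℕ) :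
    MvPolynomial.coeff v ((pT ω d p).coeff m)
      = if d - wdeg ω v = m then p.coeff v else 0 := by
  classical
  unfold pT
  rw [Polynomial.finset_sum_coeff]
  simp only [Polynomial.coeff_monomial]
  rw [MvPolynomial.coeff_sum]
  have : ∀ w ∈ p.support,
      MvPolynomial.coeff v (if d - wdeg ω w = m then MvPolynomial.monomial w (p.coeff w) else 0)
        = if w = v then (if d - wdeg ω v = m then p.coeff v else 0) else 0 := by
    intro w _
    split_ifs with h1 h2 h3 <;> simp_all [MvPolynomial.coeff_monomial]
  rw [Finset.sum_congr rfl this, Finset.sum_ite_eq' p.support v]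
  by_cases hv : v ∈ p.support
  · rw [if_pos hv]
  · rw [if_neg hv, MvPolynomial.notMem_support_iff.mp hv]
    simp

noncomputable def phi (D : ℕ) (g : Fin k → At K n) : Fin k → A K n :=
  fun j => ∑ m ∈ (g j).support,
    ∑ u ∈ ((g j).coeff m).support.filter (fun u => m + (wdeg ω u + ε j) = D),
      MvPolynomial.monomial u (MvPolynomial.coeff u ((g j).coeff m))

lemma phi_coeff (D : ℕ) (g : Fin k → At K n) (j : Fin k) (u : Fin n →₀ ℕ) :
    MvPolynomial.coeff u (phi ω ε D g j)
      = if wdeg ω u + ε j ≤ D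
          then MvPolynomial.coeff u ((g j).coeff (D - (wdeg ω u + ε j))) else 0 := by
  classical
  unfold phi
  rw [MvPolynomial.coeff_sum]
  have h1 : ∀ m ∈ (g j).support,
      MvPolynomial.coeff u (∑ u' ∈ ((g j).coeff m).support.filter
          (fun u' => m + (wdeg ω u' + ε j) = D),
        MvPolynomial.monomial u' (MvPolynomial.coeff u' ((g j).coeff m)))
      = if m + (wdeg ω u + ε j) = D then MvPolynomial.coeff u ((g j).coeff m) else 0 := by
    intro m _
    rw [MvPolynomial.coeff_sum]
    have : ∀ u' ∈ ((g j).coeff m).support.filter (fun u' => m + (wdeg ω u' + ε j) = D),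
        MvPolynomial.coeff u (MvPolynomial.monomial u' (MvPolynomial.coeff u' ((g j).coeff m)))
        = if u' = u then (if m + (wdeg ω u + ε j) = D
            then MvPolynomial.coeff u ((g j).coeff m) else 0) else 0 := by
      intro u' hu'
      rcases Finset.mem_filter.mp hu' with ⟨_, hcond⟩
      split_ifs with h1 h2 <;> simp_all [MvPolynomial.coeff_monomial]
    rw [Finset.sum_congr rfl this, Finset.sum_ite_eq' _ u]
    by_cases hu : u ∈ ((g j).coeff m).support.filter (fun u' => m + (wdeg ω u' + ε j) = D)
    · rw [if_pos hu]
    · rw [if_neg hu]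
      by_cases hc : m + (wdeg ω u + ε j) = D
      · have : u ∉ ((g j).coeff m).support := by
          intro hmem; exact hu (Finset.mem_filter.mpr ⟨hmem, hc⟩)
        rw [if_pos hc, MvPolynomial.notMem_support_iff.mp this]
      · rw [if_neg hc]
  rw [Finset.sum_congr rfl h1]
  by_cases hx : wdeg ω u + ε j ≤ D
  · rw [if_pos hx]
    rw [Finset.sum_eq_single (D - (wdeg ω u + ε j))]
    · rw [if_pos (by omega)]
    · intro m _ hm; rw [if_neg (by omega)]
    · intro hns
      rw [Polynomial.notMem_support_iff.mp hns]
      simp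
  · rw [if_neg hx]
    apply Finset.sum_eq_zero
    intro m _
    rw [if_neg (by omega)]

def HWt (D : ℕ) (g : Fin k → At K n) : Prop :=
  ∀ j m u, MvPolynomial.coeff u ((g j).coeff m) ≠ 0 → m + (wdeg ω u + ε j) = D

def HWtP (d : ℕ) (q : At K n) : Prop :=
  ∀ m v, MvPolynomial.coeff v (q.coeff m) ≠ 0 → m + wdeg ω v = d

noncomputable def ev1 (g : Fin k → At K n) : Fin k → A K n := fun j => (g j).eval 1

def WLE (D : ℕ) (f : Fin k → A K n) : Prop :=
  ∀ j, ∀ u ∈ (f j).support, wdeg ω u + ε j ≤ D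

lemma coeff_eval_one (p : At K n) (u : Fin n →₀ ℕ) :
    MvPolynomial.coeff u (p.eval 1) = ∑ m ∈ p.support, MvPolynomial.coeff u (p.coeff m) := by
  rw [Polynomial.eval_eq_sum, Polynomial.sum_def]
  simp only [one_pow, mul_one]
  rw [MvPolynomial.coeff_sum]

lemma hT_HWt {D : ℕ} {f : Fin k → A K n} (hf : WLE ω ε D f) : HWt ω ε D (hT ω ε D f) := by
  intro j m u h
  rw [hT_coeff] at h
  by_cases hc : D - (wdeg ω u + ε j) = m
  · rw [if_pos hc] at h
    have := hf j u (MvPolynomial.mem_support_iff.mpr h)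
    omega
  · rw [if_neg hc] at h; exact absurd rfl h

lemma pT_HWtP {d : ℕ} {p : A K n} (hd : ∀ v ∈ p.support, wdeg ω v ≤ d) :
    HWtP ω d (pT ω d p) := by
  intro m v h
  rw [pT_coeff] at h
  by_cases hc : d - wdeg ω v = m
  · rw [if_pos hc] at h
    have := hd v (MvPolynomial.mem_support_iff.mpr h)
    omega
  · rw [if_neg hc] at h; exact absurd rfl h

lemma HWtP_Xpow (e : ℕ) : HWtP ω e ((Polynomial.X : At K n) ^ e) := by
  intro m v h
  rw [Polynomial.coeff_X_pow] at h
  by_cases hc : m = e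
  · rw [if_pos hc] at h
    rw [MvPolynomial.coeff_one] at h
    by_cases h0 : (0 : Fin n →₀ ℕ) = v
    · subst h0 hc
      simp [wdeg]
    · rw [if_neg h0] at h; exact absurd rfl h
  · rw [if_neg hc] at h; exact absurd rfl h

lemma HWt_smul {d D : ℕ} {q : At K n} {g : Fin k → At K n}
    (hq : HWtP ω d q) (hg : HWt ω ε D g) : HWt ω ε (d + D) (q • g) := by
  classical
  intro j m u h
  rw [Pi.smul_apply, smul_eq_mul, Polynomial.coeff_mul, MvPolynomial.coeff_sum] at h
  obtain ⟨x, hx, hne⟩ := Finset.exists_ne_zero_of_sum_ne_zero h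
  rw [Finset.HasAntidiagonal.mem_antidiagonal] at hx
  have hmem := MvPolynomial.mem_support_iff.mpr hne
  have hsub := MvPolynomial.support_mul _ _ hmem
  rw [Finset.mem_add] at hsub
  obtain ⟨v, hv, w, hw, hvw⟩ := hsub
  have h1 := hq x.1 v (MvPolynomial.mem_support_iff.mp hv)
  have h2 := hg j x.2 w (MvPolynomial.mem_support_iff.mp hw)
  have h3 : wdeg ω u = wdeg ω v + wdeg ω w := by rw [← hvw, wdeg_add]
  omega

lemma eq_hT_ev1 {D : ℕ} {g : Fin k → At K n} (hg : HWt ω ε D g) :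
    hT ω ε D (ev1 g) = g := by
  classical
  funext j
  apply Polynomial.ext; intro m
  apply MvPolynomial.ext; intro u
  rw [hT_coeff]
  show (if D - (wdeg ω u + ε j) = m then MvPolynomial.coeff u ((g j).eval 1) else 0) = _
  rw [coeff_eval_one]
  by_cases h : D - (wdeg ω u + ε j) = m
  · rw [if_pos h]
    by_cases hx : wdeg ω u + ε j ≤ D
    · rw [Finset.sum_eq_single m]
      · intro m' hm' hne
        by_contra hc
        have := hg j m' u hc
        omega
      · intro hns
        rw [Polynomial.notMem_support_iff.mp hns]
        simp
    · rw [Finset.sum_eq_zero]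
      · symm; by_contra hc
        have := hg j m u hc
        omega
      · intro m' _
        by_contra hc
        have := hg j m' u hc
        omega
  · rw [if_neg h]
    symm; by_contra hc
    have := hg j m u hc
    omega

lemma ev1_hT (D : ℕ) (f : Fin k → A K n) : ev1 (hT ω ε D f) = f := by
  funext j
  show (hT ω ε D f j).eval 1 = f j
  unfold hT
  rw [Polynomial.eval_finset_sum]
  simp only [Polynomial.eval_monomial, one_pow, mul_one]
  exact MvPolynomial.support_sum_monomial_coeff (f j)

lemma pT_eval (d : ℕ) (p : A K n) : (pT ω d p).eval 1 = p := by
  unfold pT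
  rw [Polynomial.eval_finset_sum]
  simp only [Polynomial.eval_monomial, one_pow, mul_one]
  exact MvPolynomial.support_sum_monomial_coeff p

lemma ev1_smul (q : At K n) (g : Fin k → At K n) :
    ev1 (q • g) = fun j => q.eval 1 * ev1 g j := by
  funext j
  show ((q • g) j).eval 1 = _
  rw [Pi.smul_apply, smul_eq_mul, Polynomial.eval_mul]
  rfl

lemma hT_smul {d D : ℕ} {p : A K n} {f : Fin k → A K n}
    (hd : ∀ v ∈ p.support, wdeg ω v ≤ d) (hD : WLE ω ε D f) :
    pT ω d p • hT ω ε D f = hT ω ε (d + D) (p • f) := by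
  have h1 : HWt ω ε (d + D) (pT ω d p • hT ω ε D f) :=
    HWt_smul ω ε (pT_HWtP ω hd) (hT_HWt ω ε hD)
  have h2 : ev1 (pT ω d p • hT ω ε D f) = p • f := by
    rw [ev1_smul, pT_eval, ev1_hT]
    funext j
    rw [Pi.smul_apply, smul_eq_mul]
  rw [← eq_hT_ev1 ω ε h1, h2]

lemma hT_shiftX {D : ℕ} {f : Fin k → A K n} (e : ℕ) (hD : WLE ω ε D f) :
    ((Polynomial.X : At K n) ^ e) • hT ω ε D f = hT ω ε (e + D) f := by
  have h1 : HWt ω ε (e + D) (((Polynomial.X : At K n) ^ e) • hT ω ε D f) :=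
    HWt_smul ω ε (HWtP_Xpow ω e) (hT_HWt ω ε hD)
  have h2 : ev1 (((Polynomial.X : At K n) ^ e) • hT ω ε D f) = f := by
    rw [ev1_smul, ev1_hT]
    funext j
    simp
  rw [← eq_hT_ev1 ω ε h1, h2]

lemma hT_add (D : ℕ) (x y : Fin k → A K n) :
    hT ω ε D (x + y) = hT ω ε D x + hT ω ε D y := by
  funext j
  apply Polynomial.ext; intro m
  apply MvPolynomial.ext; intro u
  rw [Pi.add_apply, Polynomial.coeff_add, MvPolynomial.coeff_add, hT_coeff, hT_coeff, hT_coeff,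
    Pi.add_apply, MvPolynomial.coeff_add]
  split_ifs <;> simp

lemma hT_zero (D : ℕ) : hT ω ε D (0 : Fin k → A K n) = 0 := by
  funext j
  show ∑ u ∈ (0 : A K n).support, _ = _
  simp

lemma hT_finsum {ι : Type*} (D : ℕ) (s : Finset ι) (F : ι → (Fin k → A K n)) :
    hT ω ε D (∑ i ∈ s, F i) = ∑ i ∈ s, hT ω ε D (F i) := by
  classical
  induction s using Finset.induction_on with
  | empty => simp [hT_zero]
  | insert _ _ hx ih => rw [Finset.sum_insert hx, Finset.sum_insert hx, hT_add, ih]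

lemma phi_zero (D : ℕ) : phi ω ε D (0 : Fin k → At K n) = 0 := by
  funext j
  apply MvPolynomial.ext; intro u
  rw [phi_coeff]
  simp

lemma phi_add (D : ℕ) (x y : Fin k → At K n) :
    phi ω ε D (x + y) = phi ω ε D x + phi ω ε D y := by
  funext j
  apply MvPolynomial.ext; intro u
  rw [Pi.add_apply, MvPolynomial.coeff_add, phi_coeff, phi_coeff, phi_coeff, Pi.add_apply,
    Polynomial.coeff_add, MvPolynomial.coeff_add]
  split_ifs <;> simp

lemma phi_CC (D : ℕ) (c : K) (g : Fin k → At K n) :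
    phi ω ε D (Polynomial.C (MvPolynomial.C c : A K n) • g) = (MvPolynomial.C c : A K n) • phi ω ε D g := by
  funext j
  apply MvPolynomial.ext; intro u
  rw [Pi.smul_apply, smul_eq_mul, MvPolynomial.coeff_C_mul, phi_coeff, phi_coeff, Pi.smul_apply,
    smul_eq_mul, Polynomial.coeff_C_mul, MvPolynomial.coeff_C_mul]
  split_ifs <;> simp

lemma phi_X_succ (D : ℕ) (g : Fin k → At K n) :
    phi ω ε (D + 1) ((Polynomial.X : At K n) • g) = phi ω ε D g := by
  funext j
  apply MvPolynomial.ext; intro u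
  rw [phi_coeff, phi_coeff, Pi.smul_apply, smul_eq_mul]
  by_cases hx : wdeg ω u + ε j ≤ D
  · rw [if_pos (by omega), if_pos hx]
    have h1 : D + 1 - (wdeg ω u + ε j) = (D - (wdeg ω u + ε j)) + 1 := by omega
    rw [h1, Polynomial.coeff_X_mul]
  · rw [if_neg hx]
    by_cases hx1 : wdeg ω u + ε j ≤ D + 1
    · rw [if_pos hx1]
      have h1 : D + 1 - (wdeg ω u + ε j) = 0 := by omega
      rw [h1, Polynomial.mul_coeff_zero, Polynomial.coeff_X_zero, zero_mul,
        MvPolynomial.coeff_zero]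
    · rw [if_neg hx1]

lemma phi_X_zero (g : Fin k → At K n) :
    phi ω ε 0 ((Polynomial.X : At K n) • g) = 0 := by
  funext j
  apply MvPolynomial.ext; intro u
  rw [phi_coeff, Pi.smul_apply, smul_eq_mul]
  by_cases hx : wdeg ω u + ε j ≤ 0
  · rw [if_pos hx]
    have h1 : 0 - (wdeg ω u + ε j) = 0 := by omega
    rw [h1, Polynomial.mul_coeff_zero, Polynomial.coeff_X_zero, zero_mul,
      MvPolynomial.coeff_zero, Pi.zero_apply, MvPolynomial.coeff_zero]
  · rw [if_neg hx]
    simp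

lemma wdeg_sub_single {i : Fin n} {u : Fin n →₀ ℕ} (h : i ∈ u.support) :
    wdeg ω (u - Finsupp.single i 1) + ω i = wdeg ω u := by
  have hu : u i ≠ 0 := Finsupp.mem_support_iff.mp h
  have key : (u - Finsupp.single i 1) + Finsupp.single i 1 = u := by
    ext a
    by_cases ha : a = i
    · subst ha
      simp only [Finsupp.add_apply, Finsupp.tsub_apply, Finsupp.single_eq_same]
      omega
    · simp [Finsupp.single_eq_of_ne' (Ne.symm ha), Finsupp.add_apply, Finsupp.tsub_apply]
  have hsingle : wdeg ω (Finsupp.single i 1) = ω i := by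
    unfold wdeg
    simp
  calc wdeg ω (u - Finsupp.single i 1) + ω i
      = wdeg ω (u - Finsupp.single i 1) + wdeg ω (Finsupp.single i 1) := by rw [hsingle]
    _ = wdeg ω ((u - Finsupp.single i 1) + Finsupp.single i 1) := (wdeg_add ω _ _).symm
    _ = wdeg ω u := by rw [key]

lemma phi_CX (i : Fin n) (D : ℕ) (g : Fin k → At K n) :
    phi ω ε D (Polynomial.C (MvPolynomial.X i : A K n) • g)
      = if ω i ≤ D then (MvPolynomial.X i : A K n) • phi ω ε (D - ω i) g else 0 := by
  classical
  funext j
  apply MvPolynomial.ext; intro u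
  rw [phi_coeff]
  by_cases hi : i ∈ u.support
  · have hkey := wdeg_sub_single ω hi
    by_cases hx : wdeg ω u + ε j ≤ D
    · have hωi : ω i ≤ D := by omega
      rw [if_pos hx, if_pos hωi, Pi.smul_apply, smul_eq_mul, Polynomial.coeff_C_mul,
        mul_comm (MvPolynomial.X i : A K n), MvPolynomial.coeff_mul_X', if_pos hi,
        Pi.smul_apply, smul_eq_mul, mul_comm (MvPolynomial.X i : A K n),
        MvPolynomial.coeff_mul_X', if_pos hi, phi_coeff,
        if_pos (by omega : wdeg ω (u - Finsupp.single i 1) + ε j ≤ D - ω i)]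
      have harith : D - (wdeg ω u + ε j) = D - ω i - (wdeg ω (u - Finsupp.single i 1) + ε j) := by
        omega
      rw [harith]
    · rw [if_neg hx]
      by_cases hωi : ω i ≤ D
      · rw [if_pos hωi, Pi.smul_apply, smul_eq_mul, mul_comm (MvPolynomial.X i : A K n),
          MvPolynomial.coeff_mul_X', if_pos hi, phi_coeff,
          if_neg (by omega : ¬ wdeg ω (u - Finsupp.single i 1) + ε j ≤ D - ω i)]
      · rw [if_neg hωi, Pi.zero_apply, MvPolynomial.coeff_zero]
  · by_cases hx : wdeg ω u + ε j ≤ D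
    · rw [if_pos hx, Pi.smul_apply, smul_eq_mul, Polynomial.coeff_C_mul,
        mul_comm (MvPolynomial.X i : A K n), MvPolynomial.coeff_mul_X', if_neg hi]
      split_ifs with hωi
      · rw [Pi.smul_apply, smul_eq_mul, mul_comm (MvPolynomial.X i : A K n),
          MvPolynomial.coeff_mul_X', if_neg hi]
      · rw [Pi.zero_apply, MvPolynomial.coeff_zero]
    · rw [if_neg hx]
      split_ifs with hωi
      · rw [Pi.smul_apply, smul_eq_mul, mul_comm (MvPolynomial.X i : A K n),
          MvPolynomial.coeff_mul_X', if_neg hi]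
      · rw [Pi.zero_apply, MvPolynomial.coeff_zero]

lemma phi_pow (e : ℕ) (D : ℕ) (x : Fin k → At K n) :
    phi ω ε (D + e) (((Polynomial.X : At K n) ^ e) • x) = phi ω ε D x := by
  induction e with
  | zero => simp
  | succ e ih =>
    have h1 : ((Polynomial.X : At K n) ^ (e + 1)) • x
        = (Polynomial.X : At K n) • (((Polynomial.X : At K n) ^ e) • x) := by
      rw [← mul_smul, ← pow_succ']
    have h2 : D + (e + 1) = (D + e) + 1 := by omega
    rw [h1, h2, phi_X_succ, ih]

lemma phi_hT {W : ℕ} {f : Fin k → A K n} (D : ℕ) (hf : WLE ω ε W f) :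
    phi ω ε D (hT ω ε W f) = if D = W then f else 0 := by
  by_cases hD : D = W
  · subst hD
    rw [if_pos rfl]
    funext j
    apply MvPolynomial.ext; intro u
    rw [phi_coeff]
    by_cases hx : wdeg ω u + ε j ≤ D
    · rw [if_pos hx, hT_coeff, if_pos rfl]
    · rw [if_neg hx]
      symm
      by_contra hc
      exact hx (hf j u (MvPolynomial.mem_support_iff.mpr hc))
  · rw [if_neg hD]
    funext j
    apply MvPolynomial.ext; intro u
    rw [phi_coeff, Pi.zero_apply, MvPolynomial.coeff_zero]
    by_cases hx : wdeg ω u + ε j ≤ D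
    · rw [if_pos hx, hT_coeff]
      by_cases hc : W - (wdeg ω u + ε j) = D - (wdeg ω u + ε j)
      · rw [if_pos hc]
        by_contra hne
        have := hf j u (MvPolynomial.mem_support_iff.mpr hne)
        omega
      · rw [if_neg hc]
    · rw [if_neg hx]



lemma homogenize_eq_hT (f : Fin k → A K n) :
    homogenize ω ε f = hT ω ε (maxWt ω ε f) f := rfl

lemma WLE_maxWt (f : Fin k → A K n) : WLE ω ε (maxWt ω ε f) f := by
  intro j u hu
  refine le_trans (Finset.le_sup (f := fun u => wdeg ω u + ε j) hu) ?_
  exact Finset.le_sup (f := fun j => (f j).support.sup fun u => wdeg ω u + ε j)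
    (Finset.mem_univ j)

lemma maxWt_le_of_WLE {D : ℕ} {f : Fin k → A K n} (h : WLE ω ε D f) : maxWt ω ε f ≤ D :=
  Finset.sup_le fun j _ => Finset.sup_le fun u hu => h j u hu

lemma phi_homogenize (f : Fin k → A K n) (D : ℕ) :
    phi ω ε D (homogenize ω ε f) = if D = maxWt ω ε f then f else 0 := by
  rw [homogenize_eq_hT]
  exact phi_hT ω ε D (WLE_maxWt ω ε f)

set_option maxHeartbeats 1000000 in
lemma phi_smul_mem {M : Submodule (A K n) (Fin k → A K n)} :
    ∀ (q : At K n) (g : Fin k → At K n),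
      (∀ D, phi ω ε D g ∈ M) → ∀ D, phi ω ε D (q • g) ∈ M := by
  intro q
  induction q using Polynomial.induction_on with
  | C a =>
    induction a using MvPolynomial.induction_on with
    | C c =>
      intro g hg D
      rw [phi_CC]
      exact M.smul_mem _ (hg D)
    | add p p' ihp ihp' =>
      intro g hg D
      rw [map_add, add_smul, phi_add]
      exact M.add_mem (ihp g hg D) (ihp' g hg D)
    | mul_X p i ih =>
      intro g hg D
      have h1 : Polynomial.C (p * MvPolynomial.X i) • g
          = Polynomial.C p • (Polynomial.C (MvPolynomial.X i : A K n) • g) := by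
        rw [map_mul, mul_smul]
      rw [h1]
      apply ih
      intro D'
      rw [phi_CX]
      split_ifs with h
      · exact M.smul_mem _ (hg _)
      · exact M.zero_mem
  | add p q ihp ihq =>
    intro g hg D
    rw [add_smul, phi_add]
    exact M.add_mem (ihp g hg D) (ihq g hg D)
  | monomial e a ih =>
    intro g hg D
    have h1 : (Polynomial.C a * Polynomial.X ^ (e + 1)) • g
        = (Polynomial.C a * Polynomial.X ^ e) • ((Polynomial.X : At K n) • g) := by
      rw [← mul_smul, mul_assoc, ← pow_succ]
    rw [h1]
    apply ih
    intro D'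
    cases D' with
    | zero => rw [phi_X_zero]; exact M.zero_mem
    | succ D'' => rw [phi_X_succ]; exact hg _

lemma Mtilde_phi_mem {M : Submodule (A K n) (Fin k → A K n)} {g : Fin k → At K n}
    (hg : g ∈ Mtilde ω ε M) : ∀ D, phi ω ε D g ∈ M := by
  induction hg using Submodule.span_induction with
  | mem x hx =>
    obtain ⟨f', hf', rfl⟩ := hx
    intro D
    rw [phi_homogenize]
    split_ifs
    · exact hf'
    · exact M.zero_mem
  | zero => intro D; rw [phi_zero]; exact M.zero_mem
  | add x y _ _ ihx ihy => intro D; rw [phi_add]; exact M.add_mem (ihx D) (ihy D)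
  | smul q x _ ih => exact phi_smul_mem ω ε q x ih

lemma mem_Mtilde_of_phi {M : Submodule (A K n) (Fin k → A K n)} {g : Fin k → At K n}
    (hg : ∀ D, phi ω ε D g ∈ M) : g ∈ Mtilde ω ε M := by
  classical
  set B := Finset.univ.sup (fun j : Fin k => (g j).support.sup fun m =>
    m + ((((g j).coeff m).support.sup fun u => wdeg ω u) + ε j)) with hB
  have hbound : ∀ j m u, MvPolynomial.coeff u ((g j).coeff m) ≠ 0
      → m + (wdeg ω u + ε j) ≤ B := by
    intro j m u hc
    have hm : m ∈ (g j).support := Polynomial.mem_support_iff.mpr (by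
      intro h0
      rw [h0, MvPolynomial.coeff_zero] at hc
      exact hc rfl)
    have hu : u ∈ ((g j).coeff m).support := MvPolynomial.mem_support_iff.mpr hc
    have h1 : wdeg ω u ≤ ((g j).coeff m).support.sup fun u => wdeg ω u :=
      Finset.le_sup hu
    have h2 : m + ((((g j).coeff m).support.sup fun u => wdeg ω u) + ε j)
        ≤ (g j).support.sup fun m =>
          m + ((((g j).coeff m).support.sup fun u => wdeg ω u) + ε j) :=
      Finset.le_sup (f := fun m =>
        m + ((((g j).coeff m).support.sup fun u => wdeg ω u) + ε j)) hm
    have h3 : ((g j).support.sup fun m =>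
        m + ((((g j).coeff m).support.sup fun u => wdeg ω u) + ε j)) ≤ B := by
      rw [hB]
      exact Finset.le_sup (f := fun j : Fin k => (g j).support.sup fun m =>
        m + ((((g j).coeff m).support.sup fun u => wdeg ω u) + ε j)) (Finset.mem_univ j)
    omega
  have hdecomp : ∑ D ∈ Finset.range (B + 1), hT ω ε D (phi ω ε D g) = g := by
    funext j
    apply Polynomial.ext; intro m
    apply MvPolynomial.ext; intro u
    rw [Finset.sum_apply, Polynomial.finset_sum_coeff, MvPolynomial.coeff_sum]
    have hterm : ∀ D ∈ Finset.range (B + 1),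
        MvPolynomial.coeff u ((hT ω ε D (phi ω ε D g) j).coeff m)
          = if D = m + (wdeg ω u + ε j) then MvPolynomial.coeff u ((g j).coeff m) else 0 := by
      intro D _
      rw [hT_coeff]
      by_cases hD : D = m + (wdeg ω u + ε j)
      · subst hD
        rw [if_pos (by omega), if_pos rfl, phi_coeff, if_pos (by omega)]
        congr 2
        omega
      · rw [if_neg hD]
        by_cases h1 : D - (wdeg ω u + ε j) = m
        · rw [if_pos h1, phi_coeff]
          rw [if_neg (by omega)]
        · rw [if_neg h1]
    rw [Finset.sum_congr rfl hterm, Finset.sum_ite_eq' (Finset.range (B + 1))]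
    by_cases hmem : m + (wdeg ω u + ε j) ∈ Finset.range (B + 1)
    · rw [if_pos hmem]
    · rw [if_neg hmem]
      symm
      by_contra hc
      exact hmem (Finset.mem_range.mpr (by have := hbound j m u hc; omega))
  rw [← hdecomp]
  apply Submodule.sum_mem
  intro D _
  have hWle : WLE ω ε D (phi ω ε D g) := by
    intro j u hu
    by_contra hx
    have := phi_coeff ω ε D g j u
    rw [if_neg hx] at this
    exact (MvPolynomial.mem_support_iff.mp hu) this
  have hW : maxWt ω ε (phi ω ε D g) ≤ D := maxWt_le_of_WLE ω ε hWle
  have e1 : ((Polynomial.X : At K n) ^ (D - maxWt ω ε (phi ω ε D g)))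
      • homogenize ω ε (phi ω ε D g) = hT ω ε D (phi ω ε D g) := by
    rw [homogenize_eq_hT, hT_shiftX ω ε _ (WLE_maxWt ω ε _), Nat.sub_add_cancel hW]
  rw [← e1]
  exact Submodule.smul_mem _ _ (Submodule.subset_span ⟨phi ω ε D g, hg D, rfl⟩)

lemma homogenize_mem_tsat {r : ℕ} (fs : Fin r → Fin k → A K n) {f : Fin k → A K n}
    (hf : f ∈ Submodule.span (A K n) (Set.range fs)) :
    homogenize ω ε f ∈ tsat (Submodule.span (At K n)
      (Set.range fun i => homogenize ω ε (fs i))) := by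
  classical
  obtain ⟨c, hc⟩ := (Submodule.mem_span_range_iff_exists_fun _).mp hf
  set pm : Fin r → ℕ := fun i => (c i).support.sup (wdeg ω) with hpm
  set D := Finset.univ.sup (fun i => pm i + maxWt ω ε (fs i)) with hD
  have hDi : ∀ i, pm i + maxWt ω ε (fs i) ≤ D := by
    intro i
    rw [hD]
    exact Finset.le_sup (f := fun i => pm i + maxWt ω ε (fs i)) (Finset.mem_univ i)
  have hfD : WLE ω ε D f := by
    intro j u hu
    rw [← hc, Finset.sum_apply] at hu
    have hne : MvPolynomial.coeff u (∑ i, (c i • fs i) j) ≠ 0 :=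
      MvPolynomial.mem_support_iff.mp hu
    rw [MvPolynomial.coeff_sum] at hne
    obtain ⟨i, _, hi⟩ := Finset.exists_ne_zero_of_sum_ne_zero hne
    rw [Pi.smul_apply, smul_eq_mul] at hi
    have hmem := MvPolynomial.support_mul _ _ (MvPolynomial.mem_support_iff.mpr hi)
    rw [Finset.mem_add] at hmem
    obtain ⟨v, hv, w, hw, hvw⟩ := hmem
    have h1 : wdeg ω v ≤ pm i := Finset.le_sup hv
    have h2 : wdeg ω w + ε j ≤ maxWt ω ε (fs i) := WLE_maxWt ω ε (fs i) j w hw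
    have h3 : wdeg ω u = wdeg ω v + wdeg ω w := by rw [← hvw, wdeg_add]
    have h4 := hDi i
    omega
  have hWf : maxWt ω ε f ≤ D := maxWt_le_of_WLE ω ε hfD
  refine ⟨D - maxWt ω ε f, ?_⟩
  have e1 : ((Polynomial.X : At K n) ^ (D - maxWt ω ε f)) • homogenize ω ε f
      = hT ω ε D f := by
    rw [homogenize_eq_hT, hT_shiftX ω ε _ (WLE_maxWt ω ε _), Nat.sub_add_cancel hWf]
  rw [e1, ← hc, hT_finsum]
  apply Submodule.sum_mem
  intro i _
  have hmi : maxWt ω ε (fs i) ≤ D := le_trans (by omega) (hDi i)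
  have hd : ∀ v ∈ (c i).support, wdeg ω v ≤ D - maxWt ω ε (fs i) := by
    intro v hv
    have h1 : wdeg ω v ≤ pm i := Finset.le_sup hv
    have h4 := hDi i
    omega
  have e2 : pT ω (D - maxWt ω ε (fs i)) (c i) • hT ω ε (maxWt ω ε (fs i)) (fs i)
      = hT ω ε D (c i • fs i) := by
    rw [hT_smul ω ε hd (WLE_maxWt ω ε (fs i)), Nat.sub_add_cancel hmi]
  rw [← e2, ← homogenize_eq_hT]
  exact Submodule.smul_mem _ _ (Submodule.subset_span ⟨i, rfl⟩)

end Aux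

/-- **Proposition: computing a Gröbner basis is a saturation.**
If `M = ⟨f_1,…,f_r⟩ ⊆ F`, then `M̃ = ⟨f̃_1,…,f̃_r⟩ : t^∞` inside `F̃`. -/
theorem homogenization_eq_saturation
    {K : Type*} [Field K] {n k : ℕ} (ω : Fin n → ℕ) (ε : Fin k → ℕ) {r : ℕ}
    (f : Fin r → (Fin k → A K n)) :
    Mtilde ω ε (Submodule.span (A K n) (Set.range f))
      = tsat (Submodule.span (At K n) (Set.range fun i => homogenize ω ε (f i))) := by
  apply le_antisymm
  · apply Submodule.span_le.mpr
    rintro g ⟨f', hf', rfl⟩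
    exact homogenize_mem_tsat ω ε f hf'
  · intro x hx
    obtain ⟨e, he⟩ := hx
    have h1 : Submodule.span (At K n) (Set.range fun i => homogenize ω ε (f i))
        ≤ Mtilde ω ε (Submodule.span (A K n) (Set.range f)) := by
      apply Submodule.span_le.mpr
      rintro g ⟨i, rfl⟩
      exact Submodule.subset_span ⟨f i, Submodule.subset_span ⟨i, rfl⟩, rfl⟩
    have h2 := Mtilde_phi_mem ω ε (h1 he)
    apply mem_Mtilde_of_phi
    intro D
    have h3 := h2 (D + e)
    rwa [phi_pow] at h3

end CregPaper
end
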